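/- Assume the Continuum Hypothesis. Then there exists a compact, separable Hausdorff space which is van der Waerden but not Hindman. -/

import Mathlib

open Set Filter

/-- `A` contains arithmetic progressions of all finite lengths. -/
def IsAPSet (A : Set ℕ) : Prop :=
  ∀ k : ℕ, ∃ a d : ℕ, 0 < d ∧ ∀ i < k, a + i * d ∈ A

/-- The set of finite sums of distinct elements of `B`. -/
def FS (B : Set ℕ) : Set ℕ :=
  {n | ∃ F : Finset ℕ, F.Nonempty ∧ ↑F ⊆ B ∧ n = ∑ i ∈ F, i}

/-- `S` is an IP-set: it contains `FS B` for some infinite `B`. -/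
def IsIPSet (S : Set ℕ) : Prop :=
  ∃ B : Set ℕ, B.Infinite ∧ FS B ⊆ S

/-- `f` is finite-to-one on `C`. -/
def FinToOneOn (f : ℕ → ℕ) (C : Set ℕ) : Prop :=
  ∀ m : ℕ, (C ∩ f ⁻¹' {m}).Finite

/-- The Continuum Hypothesis. -/
def ContinuumHypothesis : Prop := Cardinal.aleph 1 = Cardinal.continuum.{0}

/-- `X` is a van der Waerden space. -/
def IsVanDerWaerdenSpace (X : Type*) [TopologicalSpace X] : Prop :=
  ∀ x : ℕ → X, ∃ A : Set ℕ, IsAPSet A ∧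
    ∃ q : X, ∀ U ∈ nhds q, {n ∈ A | x n ∉ U}.Finite

/-- `X` is a Hindman space. -/
def IsHindmanSpace (X : Type*) [TopologicalSpace X] : Prop :=
  ∀ x : ℕ → X, ∃ B : Set ℕ, B.Infinite ∧
    ∃ q : X, ∀ U ∈ nhds q, ∃ n₀ : ℕ, ∀ m ∈ FS (B \ {k | k < n₀}), x m ∈ U


/-!
Under CH we build, by a transfinite recursion of length `ω₁`, an almost disjoint family `𝒜` of
infinite non-IP sets that catches every finite-to-one map `g` on an AP-set `C`: some `A ∈ 𝒜` has
`{n ∈ C | g n ∈ A}` an AP-set. A single step needs that AP-sets are partition regular (van der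
Waerden, via Hales–Jewett) and selective, and the Kojman–Shelah lemma that `g` has a non-IP image
on some AP-subset of `C`; that image is the new member of `𝒜`.

The space is the one-point compactification of Mrówka's `Ψ(𝒜)`. A sequence is constant on an
AP-set or finite-to-one on one; in the latter case it converges along an AP-set to a point `A`
(for values in `ℕ`, by catching) or to `∞`. The sequence `n ↦ n` has no IP-limit: a point of
`Ψ(𝒜)` has a neighbourhood whose trace on `ℕ` is finite or a member of `𝒜`, hence not IP, and a
neighbourhood of `∞` misses a member of `𝒜` which, `𝒜` being maximal almost disjoint, meets the
generators of the IP-set infinitely often.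
-/

open scoped Topology OnePoint

def HasAPOfLength (S : Set ℕ) (k : ℕ) : Prop :=
  ∃ a d : ℕ, 0 < d ∧ ∀ i < k, a + i * d ∈ S

theorem HasAPOfLength.mono {S T : Set ℕ} {k : ℕ} (h : S ⊆ T) :
    HasAPOfLength S k → HasAPOfLength T k
  | ⟨a, d, hd, hS⟩ => ⟨a, d, hd, fun i hi => h (hS i hi)⟩

theorem HasAPOfLength.of_le {S : Set ℕ} {k l : ℕ} (hkl : k ≤ l) :
    HasAPOfLength S l → HasAPOfLength S k
  | ⟨a, d, hd, hS⟩ => ⟨a, d, hd, fun i hi => hS i (hi.trans_le hkl)⟩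

theorem Combinatorics.Line.exists_sum_apply_eq {ι : Type*} [Fintype ι] {k : ℕ}
    (l : Combinatorics.Line (Fin k) ι) :
    ∃ b s : ℕ, 0 < s ∧ ∀ x : Fin k, ∑ j, (l x j : ℕ) = b + s * x := by
  classical
  refine ⟨∑ j, ((l.idxFun j).map Fin.val).getD 0,
    (Finset.univ.filter fun j => l.idxFun j = none).card,
    Finset.card_pos.2 ⟨_, by simpa using l.proper.choose_spec⟩, fun x => ?_⟩
  have hterm : ∀ j, (l x j : ℕ) =
      ((l.idxFun j).map Fin.val).getD 0 + (if l.idxFun j = none then 1 else 0) * x := by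
    intro j
    rw [Combinatorics.Line.coe_apply]
    cases l.idxFun j <;> simp
  simp_rw [hterm, Finset.sum_add_distrib, ← Finset.sum_mul, Finset.sum_boole, Nat.cast_id]

theorem IsAPSet.exists_hasAPOfLength {κ : Type*} [Finite κ] {A : Set ℕ} (hA : IsAPSet A)
    {S : κ → Set ℕ} (hS : A ⊆ ⋃ i, S i) (k : ℕ) : ∃ i, HasAPOfLength (S i) k := by
  obtain ⟨ι, _, hHJ⟩ := Combinatorics.Line.exists_mono_in_high_dimension (Fin (k + 1)) κ
  obtain ⟨a, d, hd, hAP⟩ := hA (Fintype.card ι * k + 1)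
  have hcolour : ∀ w : ι → Fin (k + 1), ∃ i, a + (∑ j, (w j : ℕ)) * d ∈ S i := by
    intro w
    refine mem_iUnion.1 (hS (hAP _ (Nat.lt_succ_of_le ?_)))
    calc ∑ j, (w j : ℕ) ≤ ∑ _j : ι, k := Finset.sum_le_sum fun j _ => Nat.lt_succ_iff.1 (w j).2
      _ = Fintype.card ι * k := by simp
  choose colour hcolour using hcolour
  obtain ⟨l, c, hl⟩ := hHJ colour
  obtain ⟨b, s, hs, hsum⟩ := l.exists_sum_apply_eq
  refine ⟨c, HasAPOfLength.of_le k.le_succ ⟨a + b * d, s * d, Nat.mul_pos hs hd, fun x hx => ?_⟩⟩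
  have := hcolour (l ⟨x, hx⟩)
  rw [hl, hsum] at this
  convert this using 1
  ring

theorem IsAPSet.exists_of_subset_iUnion {κ : Type*} [Finite κ] {A : Set ℕ} (hA : IsAPSet A)
    {S : κ → Set ℕ} (hS : A ⊆ ⋃ i, S i) : ∃ i, IsAPSet (S i) := by
  by_contra! h
  choose k hk using fun i => not_forall.1 (h i)
  obtain ⟨N, hN⟩ := Finite.exists_le k
  obtain ⟨i, hi⟩ := hA.exists_hasAPOfLength hS N
  exact hk i (hi.of_le (hN i))

theorem IsAPSet.of_subset_union {A S T : Set ℕ} (hA : IsAPSet A) (h : A ⊆ S ∪ T) :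
    IsAPSet S ∨ IsAPSet T := by
  rw [union_eq_iUnion] at h
  obtain ⟨⟨⟩ | ⟨⟩, hi⟩ := hA.exists_of_subset_iUnion h
  exacts [.inr hi, .inl hi]

theorem IsAPSet.mono {A B : Set ℕ} (h : A ⊆ B) (hA : IsAPSet A) : IsAPSet B :=
  fun k => HasAPOfLength.mono h (hA k)

theorem IsAPSet.infinite {A : Set ℕ} (hA : IsAPSet A) : A.Infinite := by
  refine infinite_of_forall_exists_gt fun m => ?_
  obtain ⟨a, d, hd, h⟩ := hA (m + 2)
  exact ⟨_, h (m + 1) (by omega), by nlinarith⟩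

theorem IsAPSet.diff_of_finite {A F : Set ℕ} (hA : IsAPSet A) (hF : F.Finite) :
    IsAPSet (A \ F) :=
  (hA.of_subset_union (by simp)).resolve_right fun h => h.infinite hF

theorem isAPSet_univ : IsAPSet (univ : Set ℕ) :=
  fun _ => ⟨0, 1, one_pos, fun _ _ => trivial⟩

theorem IsAPSet.diff_biUnion {ι : Type*} {A : Set ℕ} (hA : IsAPSet A) {E : ι → Set ℕ}
    (hE : ∀ i, ¬ IsAPSet (E i)) (s : Finset ι) : IsAPSet (A \ ⋃ i ∈ s, E i) := by
  have hcover : A ⊆ ⋃ o : Option s, o.elim (A \ ⋃ i ∈ s, E i) fun i => E i := by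
    intro n hn
    by_cases h : n ∈ ⋃ i ∈ s, E i
    · obtain ⟨i, hi, hni⟩ := mem_iUnion₂.1 h
      exact mem_iUnion.2 ⟨some ⟨i, hi⟩, hni⟩
    · exact mem_iUnion.2 ⟨none, hn, h⟩
  obtain ⟨_ | i, hi⟩ := hA.exists_of_subset_iUnion hcover
  exacts [hi, absurd hi (hE i)]

theorem isAPSet_iUnion_image_Iio (a d : ℕ → ℕ) (hd : ∀ j, 0 < d j) :
    IsAPSet (⋃ j, (fun i => a j + i * d j) '' Iio j) :=
  fun k => ⟨a k, d k, hd k, fun i hi => mem_iUnion.2 ⟨k, i, hi, rfl⟩⟩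

theorem IsAPSet.exists_subset_finite_inter {ι : Type*} [Countable ι] {A : Set ℕ}
    (hA : IsAPSet A) {E : ι → Set ℕ} (hE : ∀ i, ¬ IsAPSet (E i)) :
    ∃ B ⊆ A, IsAPSet B ∧ ∀ i, (B ∩ E i).Finite := by
  cases isEmpty_or_nonempty ι
  · exact ⟨A, subset_rfl, hA, isEmptyElim⟩
  obtain ⟨e, he⟩ := exists_surjective_nat ι
  have hblock : ∀ j, HasAPOfLength (A \ ⋃ k ∈ Finset.range j, E (e k)) j :=
    fun j => hA.diff_biUnion (fun k => hE (e k)) (Finset.range j) j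
  choose a d hd hmem using hblock
  refine ⟨⋃ j, (fun i => a j + i * d j) '' Iio j, ?_, isAPSet_iUnion_image_Iio a d hd, ?_⟩
  · rintro _ ⟨_, ⟨j, rfl⟩, i, hi, rfl⟩
    exact (hmem j i hi).1
  · intro i
    obtain ⟨k, rfl⟩ := he i
    refine ((finite_Iic k).biUnion fun j _ =>
      (finite_Iio j).image fun i => a j + i * d j).subset ?_
    rintro _ ⟨⟨_, ⟨j, rfl⟩, i, hi, rfl⟩, hE⟩
    refine mem_biUnion (x := j) (mem_Iic.2 (not_lt.1 fun hkj => ?_)) ⟨i, hi, rfl⟩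
    exact (hmem j i hi).2 (mem_biUnion (Finset.mem_range.2 hkj) hE)

theorem IsAPSet.exists_fiber_or_finite_fibers {Y : Type*} {A : Set ℕ} (hA : IsAPSet A)
    (x : ℕ → Y) :
    (∃ y, IsAPSet (A ∩ x ⁻¹' {y})) ∨ ∃ B ⊆ A, IsAPSet B ∧ ∀ y, (B ∩ x ⁻¹' {y}).Finite := by
  refine or_iff_not_imp_left.2 fun h => ?_
  obtain ⟨B, hBA, hB, hfin⟩ :=
    hA.exists_subset_finite_inter (E := fun k => A ∩ x ⁻¹' {x k}) fun k => not_exists.1 h (x k)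
  refine ⟨B, hBA, hB, fun y => ?_⟩
  by_cases hy : y ∈ range x
  · obtain ⟨k, rfl⟩ := hy
    exact (hfin k).subset fun n hn => ⟨hn.1, hBA hn.1, hn.2⟩
  · exact finite_empty.subset fun n hn => hy ⟨n, hn.2⟩

theorem FinToOneOn.mono {g : ℕ → ℕ} {B C : Set ℕ} (h : B ⊆ C) (hg : FinToOneOn g C) :
    FinToOneOn g B :=
  fun m => (hg m).subset (inter_subset_inter_left _ h)

theorem FinToOneOn.finite_inter_preimage {g : ℕ → ℕ} {C s : Set ℕ} (hg : FinToOneOn g C)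
    (hs : s.Finite) : (C ∩ g ⁻¹' s).Finite :=
  (hs.biUnion fun m _ => hg m).subset fun _ hn => mem_biUnion hn.2 ⟨hn.1, rfl⟩

theorem FinToOneOn.tendsto_cofinite {g : ℕ → ℕ} {C : Set ℕ} (hg : FinToOneOn g C) :
    Tendsto g (cofinite ⊓ 𝓟 C) cofinite := by
  intro s hs
  rw [mem_map, mem_inf_principal, mem_cofinite]
  convert hg.finite_inter_preimage (mem_cofinite.1 hs) using 1
  ext n
  simp

theorem subset_FS (B : Set ℕ) : B ⊆ FS B :=
  fun b hb => ⟨{b}, Finset.singleton_nonempty b, by simpa using hb, by simp⟩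

theorem add_mem_FS {B : Set ℕ} {a b : ℕ} (ha : a ∈ B) (hb : b ∈ B) (hab : a ≠ b) :
    a + b ∈ FS B :=
  ⟨{a, b}, Finset.insert_nonempty _ _, by simp [insert_subset_iff, ha, hb],
    by rw [Finset.sum_pair hab]⟩

theorem IsIPSet.infinite {S : Set ℕ} : IsIPSet S → S.Infinite
  | ⟨B, hB, hFS⟩ => hB.mono ((subset_FS B).trans hFS)

/-- If `d₁ < d₂` and `d₁ + d₂` all lie in `V`, with `d₂` beyond the window of `d₁`, then
`d₂` and `d₁ + d₂` share a window `j`, so `M j + 1 ∣ d₁`, which is too large for its window. -/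
theorem not_isIPSet_of_windows {V : Set ℕ} {M r : ℕ → ℕ} (hM : StrictMono M)
    (hV : ∀ v ∈ V, ∃ j, 2 * M j < v ∧ v ≤ M (j + 1) ∧ v % (M j + 1) = r j) :
    ¬ IsIPSet V := by
  rintro ⟨D, hD, hFS⟩
  have hDV : D ⊆ V := (subset_FS D).trans hFS
  obtain ⟨d₁, hd₁⟩ := hD.nonempty
  obtain ⟨j₁, hlo₁, hhi₁, -⟩ := hV d₁ (hDV hd₁)
  obtain ⟨d₂, hd₂, hgt⟩ := hD.exists_gt (M (j₁ + 1))
  obtain ⟨j₂, hlo₂, hhi₂, hr₂⟩ := hV d₂ (hDV hd₂)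
  obtain ⟨j, hlo, hhi, hr⟩ := hV (d₁ + d₂) (hFS (add_mem_FS hd₁ hd₂ (by omega)))
  have hj₁₂ : j₁ + 1 < j₂ + 1 := hM.lt_iff_lt.1 (by omega)
  have hj : j = j₂ := by
    have h₁ : j < j₂ + 1 := hM.lt_iff_lt.1 (by omega)
    have h₂ : j₂ < j + 1 := hM.lt_iff_lt.1 (by omega)
    omega
  subst hj
  have hmod : d₁ + d₂ ≡ 0 + d₂ [MOD M j + 1] := by rw [zero_add]; exact hr.trans hr₂.symm
  have := Nat.le_of_dvd (by omega) (Nat.modEq_zero_iff_dvd.1 (hmod.add_right_cancel' d₂))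
  have := hM.monotone (show j₁ + 1 ≤ j by omega)
  omega

theorem IsAPSet.exists_residue {C : Set ℕ} {g : ℕ → ℕ} (hC : IsAPSet C) (hg : FinToOneOn g C)
    (M : ℕ) : ∃ r, IsAPSet {n ∈ C | 2 * M < g n ∧ g n % (M + 1) = r} := by
  have hlarge : IsAPSet (C \ (C ∩ g ⁻¹' Iic (2 * M))) :=
    hC.diff_of_finite (hg.finite_inter_preimage (finite_Iic _))
  obtain ⟨r, hr⟩ := hlarge.exists_of_subset_iUnion
    (S := fun r : Fin (M + 1) => {n ∈ C | 2 * M < g n ∧ g n % (M + 1) = r})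
    fun n hn => mem_iUnion.2
      ⟨⟨g n % (M + 1), Nat.mod_lt _ M.succ_pos⟩, hn.1, by simpa [hn.1] using hn.2, rfl⟩
  exact ⟨r, hr⟩

theorem IsAPSet.exists_subset_not_isIPSet_image {C : Set ℕ} {g : ℕ → ℕ} (hC : IsAPSet C)
    (hg : FinToOneOn g C) : ∃ B ⊆ C, IsAPSet B ∧ ¬ IsIPSet (g '' B) := by
  choose r hr using hC.exists_residue hg
  choose a d hd hmem using fun M j => hr M j
  -- the `j`-th block is an AP of length `j` whose `g`-values lie in the window `(2 M j, M (j+1)]`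
  obtain ⟨M, hM⟩ : ∃ M : ℕ → ℕ, ∀ j, M (j + 1) =
      max (M j + 1) ((Finset.range j).sup fun i => g (a (M j) j + i * d (M j) j)) :=
    ⟨fun j => Nat.rec 0 (fun j m => max (m + 1)
      ((Finset.range j).sup fun i => g (a m j + i * d m j))) j, fun j => rfl⟩
  refine ⟨⋃ j, (fun i => a (M j) j + i * d (M j) j) '' Iio j, ?_,
    isAPSet_iUnion_image_Iio _ _ fun j => hd _ _, ?_⟩
  · rintro _ ⟨_, ⟨j, rfl⟩, i, hi, rfl⟩
    exact (hmem _ _ i hi).1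
  refine not_isIPSet_of_windows (M := M) (r := fun j => r (M j))
    (strictMono_nat_of_lt_succ fun j => by rw [hM]; omega) ?_
  rintro _ ⟨_, ⟨_, ⟨j, rfl⟩, i, hi, rfl⟩, rfl⟩
  obtain ⟨-, hlo, hres⟩ := hmem _ _ i hi
  refine ⟨j, hlo, ?_, hres⟩
  rw [hM]
  exact le_max_of_le_right
    (Finset.le_sup (f := fun i => g (a (M j) j + i * d (M j) j)) (Finset.mem_range.2 hi))

def IsAPCatching (𝒜 : Set (Set ℕ)) : Prop :=
  ∀ (g : ℕ → ℕ) (C : Set ℕ), IsAPSet C → FinToOneOn g C → ∃ A ∈ 𝒜, IsAPSet {n ∈ C | g n ∈ A}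

/-- Catching the increasing enumeration of `S` makes `𝒜` maximal almost disjoint. -/
theorem IsAPCatching.exists_inter_infinite {𝒜 : Set (Set ℕ)} (h𝒜 : IsAPCatching 𝒜)
    {S : Set ℕ} (hS : S.Infinite) : ∃ A ∈ 𝒜, (S ∩ A).Infinite := by
  have hinj : Function.Injective (Nat.nth (· ∈ S)) := Nat.nth_injective hS
  obtain ⟨A, hA, hcatch⟩ := h𝒜 (Nat.nth (· ∈ S)) univ isAPSet_univ fun m =>
    ((finite_singleton m).preimage hinj.injOn).subset inter_subset_right
  refine ⟨A, hA, ((infinite_image_iff hinj.injOn).2 hcatch.infinite).mono ?_⟩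
  rintro _ ⟨n, hn, rfl⟩
  exact ⟨Nat.nth_mem_of_infinite hS n, hn.2⟩

theorem exists_catching_of_countable {ℱ : Set (Set ℕ)} (hℱ : ℱ.Countable) {g : ℕ → ℕ}
    {C : Set ℕ} (hC : IsAPSet C) (hg : FinToOneOn g C)
    (hno : ∀ A ∈ ℱ, ¬ IsAPSet {n ∈ C | g n ∈ A}) :
    ∃ A : Set ℕ, (A.Infinite ∧ ¬ IsIPSet A) ∧ (∀ A' ∈ ℱ, (A ∩ A').Finite) ∧
      IsAPSet {n ∈ C | g n ∈ A} := by
  have := hℱ.to_subtype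
  obtain ⟨B₀, hB₀C, hB₀, hfin⟩ := hC.exists_subset_finite_inter
    (E := fun A : ℱ => {n ∈ C | g n ∈ A.1}) fun A => hno A A.2
  obtain ⟨B, hBB₀, hB, hnotIP⟩ := hB₀.exists_subset_not_isIPSet_image (hg.mono hB₀C)
  have hBC := hBB₀.trans hB₀C
  have hB_sub : B ⊆ C ∩ g ⁻¹' (g '' B) := fun n hn => ⟨hBC hn, n, hn, rfl⟩
  refine ⟨g '' B, ⟨fun hfin' => hB.infinite ((hg.finite_inter_preimage hfin').subset hB_sub),
    hnotIP⟩, fun A' hA' => ?_, hB.mono hB_sub⟩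
  refine ((hfin ⟨A', hA'⟩).image g).subset ?_
  rintro _ ⟨⟨n, hn, rfl⟩, hnA'⟩
  exact ⟨n, ⟨hBB₀ hn, hBC hn, hnA'⟩, rfl⟩

theorem exists_forall_of_wellFoundedLT {ι β : Type*} [Preorder ι] [WellFoundedLT ι]
    (R : (t : ι) → (Iio t → β) → β → Prop) (h : ∀ t f, ∃ y, R t f y) :
    ∃ F : ι → β, ∀ t, R t (fun s => F s) (F t) := by
  choose G hG using h
  refine ⟨wellFounded_lt.fix fun t rec => G t fun s => rec s s.2, fun t => ?_⟩
  rw [wellFounded_lt.fix_eq]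
  exact hG _ _

/-- At stage `t` a new member is added only if no earlier one meets `P t`. -/
theorem exists_pairwise_forall_exists {α ι : Type*} [LinearOrder ι] [WellFoundedLT ι]
    (hι : ∀ t : ι, (Iio t).Countable) {p : α → Prop} {q : α → α → Prop} [Std.Symm q]
    {P : ι → α → Prop}
    (hP : ∀ t (ℱ : Set α), ℱ.Countable → (∀ a ∈ ℱ, ¬ P t a) →
      ∃ a, p a ∧ (∀ b ∈ ℱ, q a b) ∧ P t a) :
    ∃ 𝒜 : Set α, (∀ a ∈ 𝒜, p a) ∧ 𝒜.Pairwise q ∧ ∀ t, ∃ a ∈ 𝒜, P t a := by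
  have hcount : ∀ t (f : Iio t → Option α), {a | some a ∈ range f}.Countable := fun t f =>
    haveI := (hι t).to_subtype
    (countable_range f).preimage (Option.some_injective _)
  obtain ⟨F, hF⟩ := exists_forall_of_wellFoundedLT (fun t f y =>
      (∀ a, y = some a → p a ∧ ∀ b ∈ {b | some b ∈ range f}, q a b) ∧
      ∃ a, (some a ∈ range f ∨ y = some a) ∧ P t a) fun t f => by
    by_cases h : ∃ a, some a ∈ range f ∧ P t a
    · obtain ⟨a, ha, hPa⟩ := h
      exact ⟨none, by simp, a, .inl ha, hPa⟩
    · obtain ⟨a, hpa, hqa, hPa⟩ := hP t _ (hcount t f) fun a ha hPa => h ⟨a, ha, hPa⟩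
      refine ⟨some a, fun b hb => ?_, a, .inr rfl, hPa⟩
      obtain rfl := Option.some_injective _ hb
      exact ⟨hpa, hqa⟩
  refine ⟨{a | some a ∈ range F}, ?_, ?_, fun t => ?_⟩
  · rintro a ⟨t, ht⟩
    exact ((hF t).1 a ht).1
  · rintro a ⟨t, ht⟩ b ⟨s, hs⟩ hab
    rcases lt_trichotomy s t with hst | rfl | hts
    · exact ((hF t).1 a ht).2 b ⟨⟨s, hst⟩, hs⟩
    · exact absurd (Option.some_injective _ (ht.symm.trans hs)) hab
    · exact Std.Symm.symm _ _ (((hF s).1 b hs).2 a ⟨⟨t, hts⟩, ht⟩)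
  · obtain ⟨a, ⟨⟨s, _⟩, hs⟩ | ha, hPa⟩ := (hF t).2
    · exact ⟨a, ⟨s, hs⟩, hPa⟩
    · exact ⟨a, ⟨t, ha⟩, hPa⟩

/-- Under CH, enumerating `ρ` in order type `𝔠 = ℵ₁` leaves only countably many earlier stages. -/
theorem exists_pairwise_forall_exists_of_CH (ch : ContinuumHypothesis) {α : Type*} {ρ : Type}
    (hρ : Cardinal.mk ρ ≤ Cardinal.continuum) {p : α → Prop} {q : α → α → Prop} [Std.Symm q]
    {P : ρ → α → Prop}
    (hP : ∀ r (ℱ : Set α), ℱ.Countable → (∀ a ∈ ℱ, ¬ P r a) →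
      ∃ a, p a ∧ (∀ b ∈ ℱ, q a b) ∧ P r a) :
    ∃ 𝒜 : Set α, (∀ a ∈ 𝒜, p a) ∧ 𝒜.Pairwise q ∧ ∀ r, ∃ a ∈ 𝒜, P r a := by
  set ι := (Cardinal.mk ρ).ord.ToType
  have hmk : Cardinal.mk ι = Cardinal.mk ρ := Cardinal.mk_ord_toType _
  obtain ⟨e⟩ : Nonempty (ρ ≃ ι) := Cardinal.eq.1 hmk.symm
  have hι : ∀ t : ι, (Iio t).Countable := fun t =>
    Cardinal.le_aleph0_iff_set_countable.1 <| Cardinal.lt_aleph_one_iff.1 <|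
      ((Cardinal.mk_Iio_lt t (by rw [hmk, Ordinal.type_toType])).trans_le
        (hmk.trans_le hρ)).trans_eq ch.symm
  obtain ⟨𝒜, hp, hq', hP'⟩ :=
    exists_pairwise_forall_exists hι (P := fun t => P (e.symm t)) fun t => hP (e.symm t)
  exact ⟨𝒜, hp, hq', fun r => by simpa using hP' (e r)⟩

theorem exists_almostDisjoint_isAPCatching (ch : ContinuumHypothesis) :
    ∃ 𝒜 : Set (Set ℕ), (∀ A ∈ 𝒜, A.Infinite ∧ ¬ IsIPSet A) ∧
      𝒜.Pairwise (fun A B => (A ∩ B).Finite) ∧ IsAPCatching 𝒜 := by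
  have : Std.Symm fun A B : Set ℕ => (A ∩ B).Finite := ⟨fun A B h => by rwa [inter_comm]⟩
  obtain ⟨𝒜, hp, hq, hP⟩ := exists_pairwise_forall_exists_of_CH ch
    (ρ := {r : (ℕ → ℕ) × Set ℕ // IsAPSet r.2 ∧ FinToOneOn r.1 r.2})
    ((Cardinal.mk_subtype_le _).trans (by simp))
    (P := fun r A => IsAPSet {n ∈ r.1.2 | r.1.1 n ∈ A})
    fun r _ hℱ hno => exists_catching_of_countable hℱ r.2.1 r.2.2 hno
  exact ⟨𝒜, hp, hq, fun g C hC hg => hP ⟨(g, C), hC, hg⟩⟩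

instance OnePoint.instSeparableSpace {X : Type*} [TopologicalSpace X]
    [TopologicalSpace.SeparableSpace X] : TopologicalSpace.SeparableSpace (OnePoint X) := by
  obtain ⟨D, hD, hDense⟩ := TopologicalSpace.exists_countable_dense X
  refine ⟨⟨insert ∞ ((↑) '' D), (hD.image _).insert _, fun x => ?_⟩⟩
  induction x using OnePoint.rec
  · exact subset_closure (mem_insert _ _)
  · exact map_mem_closure OnePoint.continuous_coe (hDense _)
      fun y hy => mem_insert_of_mem _ (mem_image_of_mem _ hy)

theorem isVanDerWaerdenSpace_iff {X : Type*} [TopologicalSpace X] :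
    IsVanDerWaerdenSpace X ↔
      ∀ x : ℕ → X, ∃ A, IsAPSet A ∧ ∃ q, Tendsto x (cofinite ⊓ 𝓟 A) (𝓝 q) := by
  simp only [IsVanDerWaerdenSpace, tendsto_def, mem_inf_principal, mem_cofinite, compl_ofPred,
    Classical.not_imp, mem_preimage]

/-- The points of Mrówka's space `Ψ(𝒜)`. -/
inductive Psi (𝒜 : Set (Set ℕ)) : Type
  | nat : ℕ → Psi 𝒜
  | ofSet : 𝒜 → Psi 𝒜

namespace Psi

variable {𝒜 : Set (Set ℕ)}

instance : TopologicalSpace (Psi 𝒜) where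
  IsOpen U := ∀ A : 𝒜, ofSet A ∈ U → {n ∈ (A : Set ℕ) | nat n ∉ U}.Finite
  isOpen_univ _ _ := by simp
  isOpen_inter U V hU hV A hA := ((hU A hA.1).union (hV A hA.2)).subset fun n ⟨hn, hnUV⟩ => by
    by_cases h : nat n ∈ U
    exacts [.inr ⟨hn, fun hV => hnUV ⟨h, hV⟩⟩, .inl ⟨hn, h⟩]
  isOpen_sUnion S hS A := by
    rintro ⟨U, hUS, hAU⟩
    exact (hS U hUS A hAU).subset fun n hn => ⟨hn.1, fun hnU => hn.2 ⟨U, hUS, hnU⟩⟩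

theorem isOpen_iff {U : Set (Psi 𝒜)} :
    IsOpen U ↔ ∀ A : 𝒜, ofSet A ∈ U → {n ∈ (A : Set ℕ) | nat n ∉ U}.Finite :=
  Iff.rfl

theorem ofSet_injective : Function.Injective (ofSet : 𝒜 → Psi 𝒜) :=
  fun _ _ h => ofSet.inj h

theorem isOpen_insert_ofSet_image_nat (A : 𝒜) {s : Set ℕ} (hs : ((A : Set ℕ) \ s).Finite) :
    IsOpen (insert (ofSet A) (nat '' s)) := by
  rintro B (hB | ⟨n, -, ⟨⟩⟩)
  obtain rfl := ofSet_injective hB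
  exact hs.subset fun n hn => ⟨hn.1, fun hns => hn.2 (.inr ⟨n, hns, rfl⟩)⟩

theorem isOpen_singleton_nat (n : ℕ) : IsOpen ({nat n} : Set (Psi 𝒜)) :=
  isOpen_iff.2 fun _ h => absurd h (by simp)

theorem isOpen_of_range_nat_subset {U : Set (Psi 𝒜)} (h : range nat ⊆ U) : IsOpen U :=
  isOpen_iff.2 fun _ _ => finite_empty.subset fun n hn => hn.2 (h (mem_range_self n))

theorem isOpen_compl_singleton_nat (n : ℕ) : IsOpen ({nat n}ᶜ : Set (Psi 𝒜)) :=
  isOpen_iff.2 fun _ _ => (finite_singleton n).subset fun _ hm => by simpa using hm.2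

theorem tendsto_nat_ofSet (A : 𝒜) : Tendsto nat (cofinite ⊓ 𝓟 (A : Set ℕ)) (𝓝 (ofSet A)) := by
  intro U hU
  obtain ⟨V, hVU, hV, hAV⟩ := mem_nhds_iff.1 hU
  rw [mem_map, mem_inf_principal, mem_cofinite]
  refine (hV A hAV).subset fun n hn => ?_
  obtain ⟨hnA, hnU⟩ := Classical.not_imp.1 hn
  exact ⟨hnA, fun hnV => hnU (hVU hnV)⟩

def basicNhd (A : 𝒜) : Set (Psi 𝒜) := insert (ofSet A) (nat '' A)

theorem isOpen_basicNhd (A : 𝒜) : IsOpen (basicNhd A) :=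
  isOpen_insert_ofSet_image_nat A (by simp)

theorem isCompact_basicNhd (A : 𝒜) : IsCompact (basicNhd A) := by
  have hval : Tendsto ((↑) : ↥(A : Set ℕ) → ℕ) cofinite (cofinite ⊓ 𝓟 (A : Set ℕ)) :=
    tendsto_inf.2 ⟨Subtype.val_injective.tendsto_cofinite,
      tendsto_principal.2 (Eventually.of_forall Subtype.prop)⟩
  have := ((tendsto_nat_ofSet A).comp hval).isCompact_insert_range_of_cofinite
  rwa [range_comp, Subtype.range_coe] at this

instance : WeaklyLocallyCompactSpace (Psi 𝒜) where
  exists_compact_mem_nhds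
    | nat n => ⟨{nat n}, isCompact_singleton, (isOpen_singleton_nat n).mem_nhds rfl⟩
    | ofSet A => ⟨basicNhd A, isCompact_basicNhd A, (isOpen_basicNhd A).mem_nhds (mem_insert _ _)⟩

theorem t2Space (had : 𝒜.Pairwise fun A B => (A ∩ B).Finite) : T2Space (Psi 𝒜) := by
  have hsep : ∀ {x y : Psi 𝒜} {U V : Set (Psi 𝒜)}, IsOpen U → IsOpen V → x ∈ U → y ∈ V →
      Disjoint U V → Disjoint (𝓝 x) (𝓝 y) := fun hU hV hx hy h =>
    disjoint_of_disjoint_of_mem h (hU.mem_nhds hx) (hV.mem_nhds hy)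
  have hnat : ∀ n (y : Psi 𝒜), y ≠ nat n → Disjoint (𝓝 (nat n)) (𝓝 y) := fun n y hy =>
    hsep (isOpen_singleton_nat n) (isOpen_compl_singleton_nat n) rfl hy
      disjoint_compl_right
  refine t2Space_iff_disjoint_nhds.2 fun x y hxy => ?_
  rcases x with n | A
  · exact hnat n y (Ne.symm hxy)
  rcases y with n | B
  · exact (hnat n _ hxy).symm
  have hAB : (A : Set ℕ) ≠ B := fun h => hxy (congrArg ofSet (Subtype.ext h))
  refine hsep (isOpen_insert_ofSet_image_nat A (s := A \ B) (by simpa using had A.2 B.2 hAB))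
    (isOpen_insert_ofSet_image_nat B (s := B \ A) (by simpa using had B.2 A.2 hAB.symm))
    (mem_insert _ _) (mem_insert _ _) ?_
  rw [disjoint_left]
  rintro _ (rfl | ⟨n, hn, rfl⟩) (h | ⟨m, hm, h⟩)
  · exact hxy h
  · cases h
  · cases h
  · cases h
    exact hm.2 hn.1

theorem separableSpace (hinf : ∀ A ∈ 𝒜, A.Infinite) : TopologicalSpace.SeparableSpace (Psi 𝒜) := by
  refine ⟨⟨range nat, countable_range _, fun x => ?_⟩⟩
  rcases x with n | A
  · exact subset_closure ⟨n, rfl⟩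
  · have := cofinite_inf_principal_neBot_iff.2 (hinf A A.2)
    exact mem_closure_of_tendsto (tendsto_nat_ofSet A) (Eventually.of_forall fun n => ⟨n, rfl⟩)

theorem finite_setOf_ofSet_mem {K : Set (Psi 𝒜)} (hK : IsCompact K) :
    {A : 𝒜 | ofSet A ∈ K}.Finite := by
  obtain ⟨t, -, hKt⟩ := hK.elim_nhds_subcover (fun x => insert x (range nat)) fun x _ =>
    (isOpen_of_range_nat_subset (subset_insert _ _)).mem_nhds (mem_insert _ _)
  refine (t.finite_toSet.preimage ofSet_injective.injOn).subset fun A hA => ?_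
  obtain ⟨x, hx, hAx⟩ := mem_iUnion₂.1 (hKt hA)
  rcases hAx with rfl | ⟨n, ⟨⟩⟩
  exact hx

theorem tendsto_infty {x : ℕ → OnePoint (Psi 𝒜)} {C : Set ℕ}
    (hC : ∀ n ∈ C, ∀ m, x n ≠ (nat m : Psi 𝒜)) (hfin : ∀ y, (C ∩ x ⁻¹' {y}).Finite) :
    Tendsto x (cofinite ⊓ 𝓟 C) (𝓝 ∞) := by
  refine OnePoint.le_nhds_infty.2 fun K _ hK => ?_
  rw [mem_map, mem_inf_principal, mem_cofinite]
  refine ((finite_setOf_ofSet_mem hK).biUnion fun A _ => hfin (ofSet A)).subset fun n hn => ?_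
  obtain ⟨hnC, hnK⟩ := Classical.not_imp.1 hn
  induction hxn : x n using OnePoint.rec with
  | infty => exact absurd (.inr hxn) hnK
  | coe y =>
    rcases y with m | A
    · exact absurd hxn (hC n hnC m)
    · refine mem_biUnion (x := A) (by_contra fun hA => hnK (.inl ⟨_, hA, hxn.symm⟩)) ⟨hnC, hxn⟩

theorem tendsto_nat_comp_ofSet {g : ℕ → ℕ} {C : Set ℕ} (hg : FinToOneOn g C) (A : 𝒜) :
    Tendsto (fun n => nat (g n)) (cofinite ⊓ 𝓟 {n ∈ C | g n ∈ (A : Set ℕ)}) (𝓝 (ofSet A)) := by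
  refine (tendsto_nat_ofSet A).comp (tendsto_inf.2 ⟨?_, ?_⟩)
  · exact hg.tendsto_cofinite.mono_left (inf_le_inf_left _ (principal_mono.2 (sep_subset _ _)))
  · exact tendsto_principal.2 (eventually_inf_principal.2 (Eventually.of_forall fun _ hn => hn.2))

theorem isVanDerWaerdenSpace (h𝒜 : IsAPCatching 𝒜) : IsVanDerWaerdenSpace (OnePoint (Psi 𝒜)) := by
  refine isVanDerWaerdenSpace_iff.2 fun x => ?_
  obtain ⟨y, hy⟩ | ⟨B, -, hB, hfin⟩ := isAPSet_univ.exists_fiber_or_finite_fibers x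
  · exact ⟨_, hy, y, tendsto_const_nhds.congr'
      (eventually_inf_principal.2 (Eventually.of_forall fun n hn => hn.2.symm))⟩
  obtain hnat | hrest := hB.of_subset_union (S := B ∩ {n | ∃ m, x n = (nat m : Psi 𝒜)})
    (T := B ∩ {n | ∀ m, x n ≠ (nat m : Psi 𝒜)}) fun n hn => by
      by_cases h : ∃ m, x n = (nat m : Psi 𝒜)
      exacts [.inl ⟨hn, h⟩, .inr ⟨hn, not_exists.1 h⟩]
  · set C := B ∩ {n | ∃ m, x n = (nat m : Psi 𝒜)}
    choose! g hg using fun n (hn : n ∈ C) => hn.2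
    have hgC : FinToOneOn g C := fun m => (hfin (nat m : Psi 𝒜)).subset fun n hn =>
      ⟨hn.1.1, by rw [mem_preimage, hg n hn.1, show g n = m from hn.2]; rfl⟩
    obtain ⟨A, hA, hcatch⟩ := h𝒜 g C hnat hgC
    refine ⟨_, hcatch, ofSet ⟨A, hA⟩,
      ((OnePoint.continuous_coe.tendsto _).comp (tendsto_nat_comp_ofSet hgC ⟨A, hA⟩)).congr' ?_⟩
    exact eventually_inf_principal.2 (Eventually.of_forall fun n hn => (hg n hn.1).symm)
  · exact ⟨_, hrest, ∞, tendsto_infty (fun n hn => hn.2)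
      fun y => (hfin y).subset (inter_subset_inter_left _ inter_subset_left)⟩

theorem exists_isOpen_not_isIPSet (hnip : ∀ A ∈ 𝒜, ¬ IsIPSet A) :
    ∀ y : Psi 𝒜, ∃ V, y ∈ V ∧ IsOpen V ∧ ¬ IsIPSet {n | nat n ∈ V}
  | nat m => ⟨{nat m}, rfl, isOpen_singleton_nat m, fun h =>
      h.infinite ((finite_singleton m).subset fun n hn => by cases hn; rfl)⟩
  | ofSet A => ⟨basicNhd A, mem_insert _ _, isOpen_basicNhd A, by simpa [basicNhd] using hnip A A.2⟩

theorem not_isHindmanSpace (had : 𝒜.Pairwise fun A B => (A ∩ B).Finite)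
    (hnip : ∀ A ∈ 𝒜, ¬ IsIPSet A) (hmad : ∀ S : Set ℕ, S.Infinite → ∃ A ∈ 𝒜, (S ∩ A).Infinite) :
    ¬ IsHindmanSpace (OnePoint (Psi 𝒜)) := by
  intro h
  obtain ⟨B, hB, q, hq⟩ := h fun n => (nat n : Psi 𝒜)
  induction q using OnePoint.rec with
  | infty =>
    have := t2Space had
    obtain ⟨A, hA, hBA⟩ := hmad B hB
    have hK := isCompact_basicNhd ⟨A, hA⟩
    obtain ⟨n₀, hn₀⟩ := hq _ ((OnePoint.isOpen_compl_image_coe.2 ⟨hK.isClosed, hK⟩).mem_nhds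
      OnePoint.infty_notMem_image_coe)
    refine hBA ((finite_Iio n₀).subset fun n hn => by_contra fun hlt =>
      hn₀ n (subset_FS _ ⟨hn.1, hlt⟩) ⟨nat n, .inr ⟨n, hn.2, rfl⟩, rfl⟩)
  | coe y =>
    obtain ⟨V, hyV, hV, hnotIP⟩ := exists_isOpen_not_isIPSet hnip y
    obtain ⟨n₀, hn₀⟩ := hq _ ((OnePoint.isOpen_image_coe.2 hV).mem_nhds (mem_image_of_mem _ hyV))
    exact hnotIP ⟨_, hB.sdiff (finite_Iio n₀), fun m hm =>
      (OnePoint.coe_injective.mem_set_image (a := nat m)).1 (hn₀ m hm)⟩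

end Psi

/-- Under CH there is a compact separable Hausdorff van der Waerden space
which is not Hindman. -/
theorem exists_vdW_not_Hindman (ch : ContinuumHypothesis) :
    ∃ (X : Type) (_ : TopologicalSpace X),
      CompactSpace X ∧ TopologicalSpace.SeparableSpace X ∧ T2Space X ∧
      IsVanDerWaerdenSpace X ∧ ¬ IsHindmanSpace X := by
  obtain ⟨𝒜, h𝒜, had, hcatch⟩ := exists_almostDisjoint_isAPCatching ch
  have := Psi.t2Space had
  have := Psi.separableSpace fun A hA => (h𝒜 A hA).1
  exact ⟨OnePoint (Psi 𝒜), inferInstance, inferInstance, inferInstance, inferInstance,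
    Psi.isVanDerWaerdenSpace hcatch,
    Psi.not_isHindmanSpace had (fun A hA => (h𝒜 A hA).2) fun _ => hcatch.exists_inter_infinite⟩
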